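/- Let {D_{S_i}}_{i=1}^k be k source distributions with true labeling functions f_{S_i}, and D_T the target distribution with labeling function f_T, all over X, and let H be a hypothesis class of binary classifiers. Let h* ∈ H achieve the minimum of ε_T(h) + max_{i∈[k]} ε_{S_i}(h) over h ∈ H, and set λ := ε_T(h*) + max_{i∈[k]} ε_{S_i}(h*). Then for every h ∈ H: ε_T(h) ≤ max_{i∈[k]} ε_{S_i}(h) + λ + (1/2)·d_{HΔH}(D_T; {D_{S_i}}_{i=1}^k). -/

import Mathlib

open MeasureTheory Real Filter
open scoped ENNReal NNReal

noncomputable section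

variable {X : Type*}

/-- Error of `g` w.r.t. `g'` under distribution `D`: `E_{x ~ D} |g x - g' x|`. -/
def errE [MeasurableSpace X] (D : Measure X) (g g' : X → ℝ) : ℝ :=
  ∫ x, |g x - g' x| ∂D

/-- A binary hypothesis takes values in `{0, 1}`. -/
def IsBinary (h : X → ℝ) : Prop := ∀ x, h x = 0 ∨ h x = 1

/-- The collection `A_H` of supports of hypotheses in a class `H`. -/
def supports (H : Set (X → ℝ)) : Set (Set X) := {A | ∃ h ∈ H, A = {x | h x = 1}}

/-- `H`-divergence between two distributions:
`d_H(D, D') = 2 sup_{A ∈ A_H} |Pr_D(A) - Pr_{D'}(A)|`. -/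
def dHdiv [MeasurableSpace X] (H : Set (X → ℝ)) (D D' : Measure X) : ℝ :=
  2 * sSup {r | ∃ h ∈ H, r = |(D {x | h x = 1}).toReal - (D' {x | h x = 1}).toReal|}

/-- Symmetric difference hypothesis class `H Δ H`
(`h ⊕ h'` is `|h - h'|` for `{0,1}`-valued functions). -/
def symmDiffClass (H : Set (X → ℝ)) : Set (X → ℝ) :=
  {g | ∃ h ∈ H, ∃ h' ∈ H, g = fun x => |h x - h' x|}

/-- Multi-source divergence: `d_H(D_T; {D_{S_i}}) = max_i d_H(D_T, D_{S_i})`. -/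
def dHmulti [MeasurableSpace X] (H : Set (X → ℝ)) (DT : Measure X) {k : ℕ}
    (DS : Fin k → Measure X) : ℝ :=
  ⨆ i : Fin k, dHdiv H DT (DS i)

/-- A set family `C` shatters a finite set `s`. -/
def ShattersSet (C : Set (Set X)) (s : Finset X) : Prop :=
  ∀ t : Set X, t ⊆ (s : Set X) → ∃ A ∈ C, (s : Set X) ∩ A = t

/-- The VC dimension of a set family `C` equals `d`. -/
def VCDimEq (C : Set (Set X)) (d : ℕ) : Prop :=
  (∃ s : Finset X, s.card = d ∧ ShattersSet C s) ∧
  ∀ s : Finset X, ShattersSet C s → s.card ≤ d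

/-- Empirical (uniform) measure of a sample of size `m`. -/
def empMeasure [MeasurableSpace X] {m : ℕ} (xs : Fin m → X) : Measure X :=
  (m : ℝ≥0∞)⁻¹ • ∑ i, Measure.dirac (xs i)

/-- Empirical risk of `h` w.r.t. labeling `f` over the sample `xs`. -/
def empRisk {m : ℕ} (xs : Fin m → X) (h f : X → ℝ) : ℝ :=
  (∑ i, |h (xs i) - f (xs i)|) / m

/-!
Ben-David's single-source argument, run against any one source `S`. Two triangle inequalities
for the `L¹` error give `ε_T(h) ≤ ε_T(h*) + ε_T(h, h*)` and `ε_S(h, h*) ≤ ε_S(h) + ε_S(h*)`.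
For binary `h, h*` the disagreement `ε_D(h, h*)` is the `D`-mass of the support of
`|h - h*| ∈ HΔH`, so passing from `D_T` to `D_S` costs at most `½ d_{HΔH}(D_T, D_S)`.
Finally each source term is bounded by its maximum over the sources.
-/

lemma IsBinary.mem_Icc {h : X → ℝ} (hb : IsBinary h) (x : X) : h x ∈ Set.Icc (0 : ℝ) 1 := by
  rcases hb x with h0 | h1 <;> simp [*]

section

variable [MeasurableSpace X]

lemma integrable_abs_sub_of_mem_Icc (D : Measure X) [IsFiniteMeasure D] {g g' : X → ℝ}
    (hg : Measurable g) (hg' : Measurable g')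
    (hgI : ∀ x, g x ∈ Set.Icc (0 : ℝ) 1) (hg'I : ∀ x, g' x ∈ Set.Icc (0 : ℝ) 1) :
    Integrable (fun x => |g x - g' x|) D := by
  refine (integrable_const (1 : ℝ)).mono' (hg.sub hg').abs.aestronglyMeasurable
    (Eventually.of_forall fun x => ?_)
  obtain ⟨a0, a1⟩ := hgI x
  obtain ⟨b0, b1⟩ := hg'I x
  rw [Real.norm_eq_abs, abs_abs, abs_le]
  constructor <;> linarith

lemma errE_comm (D : Measure X) (g g' : X → ℝ) : errE D g g' = errE D g' g := by
  simp only [errE, abs_sub_comm]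

lemma errE_triangle (D : Measure X) {a b c : X → ℝ}
    (hab : Integrable (fun x => |a x - b x|) D) (hbc : Integrable (fun x => |b x - c x|) D) :
    errE D a c ≤ errE D a b + errE D b c := by
  rw [errE, errE, errE, ← integral_add hab hbc]
  exact integral_mono_of_nonneg (Eventually.of_forall fun x => abs_nonneg _) (hab.add hbc)
    (Eventually.of_forall fun x => abs_sub_le (a x) (b x) (c x))

lemma errE_eq_measureReal_of_isBinary (D : Measure X) {h h' : X → ℝ}
    (hb : IsBinary h) (hb' : IsBinary h') (hm : Measurable h) (hm' : Measurable h') :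
    errE D h h' = D.real {x | |h x - h' x| = 1} := by
  have hind : (fun x => |h x - h' x|) = {x | |h x - h' x| = 1}.indicator 1 := by
    funext x
    rcases hb x with h0 | h1 <;> rcases hb' x with h0' | h1' <;>
      simp [Set.indicator, *]
  rw [errE, hind]
  exact integral_indicator_one ((hm.sub hm').abs (measurableSet_singleton 1))

lemma abs_measureReal_sub_le_half_dHdiv (C : Set (X → ℝ)) (D D' : Measure X)
    [IsProbabilityMeasure D] [IsProbabilityMeasure D'] {g : X → ℝ} (hg : g ∈ C) :
    |D.real {x | g x = 1} - D'.real {x | g x = 1}| ≤ (1 / 2) * dHdiv C D D' := by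
  have hbdd : BddAbove
      {r | ∃ g ∈ C, r = |D.real {x | g x = 1} - D'.real {x | g x = 1}|} := by
    refine ⟨1, ?_⟩
    rintro r ⟨g, -, rfl⟩
    rw [abs_le]
    constructor <;> linarith [measureReal_nonneg (μ := D) (s := {x | g x = 1}),
      measureReal_nonneg (μ := D') (s := {x | g x = 1}),
      measureReal_le_one (μ := D) (s := {x | g x = 1}),
      measureReal_le_one (μ := D') (s := {x | g x = 1})]
  rw [dHdiv, ← mul_assoc, one_div_mul_cancel two_ne_zero, one_mul]
  exact le_csSup hbdd ⟨g, hg, rfl⟩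

lemma errE_le_errE_add_half_dHdiv (H : Set (X → ℝ)) (D D' : Measure X)
    [IsProbabilityMeasure D] [IsProbabilityMeasure D'] {h h' : X → ℝ} (hh : h ∈ H)
    (hh' : h' ∈ H) (hb : IsBinary h) (hb' : IsBinary h') (hm : Measurable h)
    (hm' : Measurable h') :
    errE D h h' ≤ errE D' h h' + (1 / 2) * dHdiv (symmDiffClass H) D D' := by
  have hdiv := abs_measureReal_sub_le_half_dHdiv (symmDiffClass H) D D'
    (g := fun x => |h x - h' x|) ⟨h, hh, h', hh', rfl⟩
  rw [errE_eq_measureReal_of_isBinary D hb hb' hm hm',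
    errE_eq_measureReal_of_isBinary D' hb hb' hm hm']
  linarith [le_abs_self (D.real {x | |h x - h' x| = 1} - D'.real {x | |h x - h' x| = 1})]

lemma errE_target_le_source_add_half_dHdiv (DS DT : Measure X)
    [IsProbabilityMeasure DS] [IsProbabilityMeasure DT] {fS fT : X → ℝ}
    (hfS : Measurable fS) (hfT : Measurable fT)
    (hfSI : ∀ x, fS x ∈ Set.Icc (0 : ℝ) 1) (hfTI : ∀ x, fT x ∈ Set.Icc (0 : ℝ) 1)
    (H : Set (X → ℝ)) {h hstar : X → ℝ} (hh : h ∈ H) (hstarH : hstar ∈ H)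
    (hb : IsBinary h) (hbstar : IsBinary hstar) (hm : Measurable h)
    (hmstar : Measurable hstar) :
    errE DT h fT ≤ errE DS h fS + (errE DT hstar fT + errE DS hstar fS)
      + (1 / 2) * dHdiv (symmDiffClass H) DT DS := by
  have htarget : errE DT h fT ≤ errE DT h hstar + errE DT hstar fT :=
    errE_triangle DT (integrable_abs_sub_of_mem_Icc DT hm hmstar hb.mem_Icc hbstar.mem_Icc)
      (integrable_abs_sub_of_mem_Icc DT hmstar hfT hbstar.mem_Icc hfTI)
  have htransfer := errE_le_errE_add_half_dHdiv H DT DS hh hstarH hb hbstar hm hmstar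
  have hsource : errE DS h hstar ≤ errE DS h fS + errE DS fS hstar :=
    errE_triangle DS (integrable_abs_sub_of_mem_Icc DS hm hfS hb.mem_Icc hfSI)
      (integrable_abs_sub_of_mem_Icc DS hfS hmstar hfSI hbstar.mem_Icc)
  rw [errE_comm DS fS hstar] at hsource
  linarith

end

theorem multi_source_population_bound_general [MeasurableSpace X] {k : ℕ} (hk : 0 < k)
    (DS : Fin k → Measure X) (DT : Measure X)
    [∀ i, IsProbabilityMeasure (DS i)] [IsProbabilityMeasure DT]
    (fS : Fin k → X → ℝ) (fT : X → ℝ)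
    (hfS : ∀ i, Measurable (fS i)) (hfT : Measurable fT)
    (hfSb : ∀ i x, fS i x ∈ Set.Icc (0:ℝ) 1) (hfTb : ∀ x, fT x ∈ Set.Icc (0:ℝ) 1)
    (H : Set (X → ℝ)) (hbin : ∀ h ∈ H, IsBinary h) (hmeas : ∀ h ∈ H, Measurable h)
    (hstar : X → ℝ) (hstarH : hstar ∈ H)
    (lam : ℝ) (hlam : lam = errE DT hstar fT + ⨆ i, errE (DS i) hstar (fS i))
    (h : X → ℝ) (hh : h ∈ H) :
    errE DT h fT ≤ (⨆ i, errE (DS i) h (fS i)) + lam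
      + (1 / 2) * dHmulti (symmDiffClass H) DT DS := by
  let i : Fin k := ⟨0, hk⟩
  have hsingle := errE_target_le_source_add_half_dHdiv (DS i) DT (hfS i) hfT (hfSb i) hfTb H
    hh hstarH (hbin h hh) (hbin hstar hstarH) (hmeas h hh) (hmeas hstar hstarH)
  have herr := le_ciSup (Finite.bddAbove_range fun j => errE (DS j) h (fS j)) i
  have herrstar := le_ciSup (Finite.bddAbove_range fun j => errE (DS j) hstar (fS j)) i
  have hdiv : dHdiv (symmDiffClass H) DT (DS i) ≤ dHmulti (symmDiffClass H) DT DS :=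
    le_ciSup (Finite.bddAbove_range fun j => dHdiv (symmDiffClass H) DT (DS j)) i
  rw [hlam]
  linarith

/-- Population multi-source generalization bound (Theorem 2 of the paper):
`ε_T(h) ≤ max_i ε_{S_i}(h) + λ + (1/2) d_{HΔH}(D_T; {D_{S_i}})`. -/
theorem multi_source_population_bound [MeasurableSpace X] {k : ℕ} (hk : 0 < k)
    (DS : Fin k → Measure X) (DT : Measure X)
    [∀ i, IsProbabilityMeasure (DS i)] [IsProbabilityMeasure DT]
    (fS : Fin k → X → ℝ) (fT : X → ℝ)
    (hfS : ∀ i, Measurable (fS i)) (hfT : Measurable fT)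
    (hfSb : ∀ i x, fS i x ∈ Set.Icc (0:ℝ) 1) (hfTb : ∀ x, fT x ∈ Set.Icc (0:ℝ) 1)
    (H : Set (X → ℝ)) (hbin : ∀ h ∈ H, IsBinary h) (hmeas : ∀ h ∈ H, Measurable h)
    (hstar : X → ℝ) (hstarH : hstar ∈ H)
    (hstarOpt : ∀ h ∈ H,
      errE DT hstar fT + ⨆ i, errE (DS i) hstar (fS i)
        ≤ errE DT h fT + ⨆ i, errE (DS i) h (fS i))
    (lam : ℝ) (hlam : lam = errE DT hstar fT + ⨆ i, errE (DS i) hstar (fS i))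
    (h : X → ℝ) (hh : h ∈ H) :
    errE DT h fT ≤ (⨆ i, errE (DS i) h (fS i)) + lam
      + (1 / 2) * dHmulti (symmDiffClass H) DT DS :=
  multi_source_population_bound_general hk DS DT fS fT hfS hfT hfSb hfTb H hbin hmeas hstar hstarH
    lam hlam h hh
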